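/- arXiv:2108.00285 — 2 statements merged into one kernel-verified Lean document; each statement's English description precedes it below -/
import Mathlib

section
/- Let α > 0, let Y be a finite set of real numbers (the source points), let S : ℝ → ℝ be a weight function, and let c ∈ ℝ (the source-box center). For each n ∈ ℕ define A_n := Σ_{y ∈ Y} S(y) · (1/n!) · ((y − c)/√α)ⁿ. Then for every x ∈ ℝ, the series with n-th term A_n · h_n((x − c)/√α) converges and its sum equals Σ_{y ∈ Y} S(y) · exp(−((y − x)/√α)²). (This is the Multipole-to-Multipole (M2M) aggregation formula of the Fast Gauss Transform: the contribution of all sources in a box is identified with a single Hermite expansion about the box center.) -/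
open Real

/-- The Hermite function `h_n(t) = (−1)ⁿ · (dⁿ/dtⁿ) exp(−t²)`. -/
noncomputable def hermiteFun (n : ℕ) (t : ℝ) : ℝ :=
  (-1) ^ n * iteratedDeriv n (fun s : ℝ => Real.exp (-s ^ 2)) t

/-!
The Gaussian generates the Hermite functions: Taylor expansion of the entire function
`z ↦ exp(-(t - z)²)` about `0` gives `exp(-(t - s)²) = ∑ sⁿ/n! · h_n(t)` for all real `s, t`,
the complex derivatives at real points being the real ones. With `t = (x - c)/√α` and
`s = (y - c)/√α` we have `t - s = (x - y)/√α`, and summing over the sources `y` with weights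
`S y` regroups into the coefficients `A_n`.
-/

open scoped ContDiff

theorem iteratedDeriv_ofReal_eq_of_forall_ofReal {f : ℂ → ℂ} {g : ℝ → ℝ}
    (hf : Differentiable ℂ f) (hg : ContDiff ℝ ∞ g) (hfg : ∀ x : ℝ, f x = g x) (n : ℕ) (x : ℝ) :
    iteratedDeriv n f x = ((iteratedDeriv n g x : ℝ) : ℂ) := by
  induction n generalizing x with
  | zero => simpa using hfg x
  | succ n ih =>
    have hf' : HasDerivAt (fun s : ℝ => iteratedDeriv n f s) (iteratedDeriv (n + 1) f x) x := by
      rw [iteratedDeriv_succ]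
      exact ((hf.contDiff (n := ∞)).differentiable_iteratedDeriv n
        (by exact_mod_cast WithTop.coe_lt_top _)).differentiableAt.hasDerivAt.comp_ofReal
    have hg' : HasDerivAt (fun s : ℝ => ((iteratedDeriv n g s : ℝ) : ℂ))
        ((iteratedDeriv (n + 1) g x : ℝ) : ℂ) x := by
      rw [iteratedDeriv_succ]
      exact (hg.differentiable_iteratedDeriv n
        (by exact_mod_cast WithTop.coe_lt_top _)).differentiableAt.hasDerivAt.ofReal_comp
    exact hf'.unique (by simpa only [ih] using hg')

theorem ofReal_hermiteFun (n : ℕ) (t : ℝ) :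
    (hermiteFun n t : ℂ) = (-1) ^ n * iteratedDeriv n (fun z : ℂ => Complex.exp (-z ^ 2)) t := by
  rw [iteratedDeriv_ofReal_eq_of_forall_ofReal (g := fun s : ℝ => Real.exp (-s ^ 2))
    (by fun_prop) (by fun_prop) (fun x => by push_cast; rfl), hermiteFun]
  push_cast
  rfl

theorem hasSum_pow_div_factorial_mul_hermiteFun (s t : ℝ) :
    HasSum (fun n : ℕ => s ^ n / n.factorial * hermiteFun n t) (Real.exp (-(t - s) ^ 2)) := by
  have htaylor := Complex.hasSum_taylorSeries_of_entire
    (f := fun z : ℂ => Complex.exp (-(t - z) ^ 2)) (by fun_prop) 0 s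
  rw [← Complex.hasSum_ofReal, Complex.ofReal_exp]
  push_cast
  convert htaylor using 1
  · exact rfl
  · funext n
    rw [iteratedDeriv_comp_const_sub n (fun z : ℂ => Complex.exp (-z ^ 2)), ofReal_hermiteFun]
    simp only [smul_eq_mul, sub_zero]
    ring

theorem fgt_m2m_aggregation_general (α : ℝ)
    (Y : Finset ℝ) (S : ℝ → ℝ) (c : ℝ) (A : ℕ → ℝ)
    (hA : ∀ n, A n = ∑ y ∈ Y, S y * (1 / (n.factorial : ℝ)) * ((y - c) / Real.sqrt α) ^ n) :
    ∀ x : ℝ,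
      HasSum (fun n : ℕ => A n * hermiteFun n ((x - c) / Real.sqrt α))
        (∑ y ∈ Y, S y * Real.exp (-((y - x) / Real.sqrt α) ^ 2)) := by
  intro x
  have hsource : ∀ y ∈ Y, HasSum
      (fun n : ℕ => S y * (((y - c) / √α) ^ n / n.factorial * hermiteFun n ((x - c) / √α)))
      (S y * Real.exp (-((y - x) / √α) ^ 2)) := fun y _ => by
    have h := (hasSum_pow_div_factorial_mul_hermiteFun ((y - c) / √α) ((x - c) / √α)).mul_left (S y)
    rwa [show (x - c) / √α - (y - c) / √α = -((y - x) / √α) by ring, neg_sq] at h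
  convert hasSum_sum hsource using 2 with n
  rw [hA n, Finset.sum_mul]
  exact Finset.sum_congr rfl fun y _ => by ring

/-- **M2M aggregation formula of the Fast Gauss Transform.**
With `A_n := Σ_{y ∈ Y} S(y)·(1/n!)·((y−c)/√α)ⁿ`, for every `x` the series with `n`-th
term `A_n·h_n((x−c)/√α)` converges with sum `Σ_{y ∈ Y} S(y)·exp(−((y−x)/√α)²)`. -/
theorem fgt_m2m_aggregation (α : ℝ) (hα : 0 < α)
    (Y : Finset ℝ) (S : ℝ → ℝ) (c : ℝ) (A : ℕ → ℝ)
    (hA : ∀ n, A n = ∑ y ∈ Y, S y * (1 / (n.factorial : ℝ)) * ((y - c) / Real.sqrt α) ^ n) :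
    ∀ x : ℝ,
      HasSum (fun n : ℕ => A n * hermiteFun n ((x - c) / Real.sqrt α))
        (∑ y ∈ Y, S y * Real.exp (-((y - x) / Real.sqrt α) ^ 2)) :=
  fgt_m2m_aggregation_general α Y S c A hA
end

section
/- Let α > 0, let c, b ∈ ℝ, and let A : ℕ → ℝ be a finitely supported family of coefficients. For each m ∈ ℕ define E_m := ((−1)^m/m!) · Σ_n A_n · h_{n+m}((b − c)/√α) (a finite sum). Then for every x ∈ ℝ, the series with m-th term E_m · ((x − b)/√α)^m converges and its sum equals Σ_n A_n · h_n((x − c)/√α). (This is the Multipole-to-Local (M2L) step of the Fast Gauss Transform: a truncated Hermite expansion about the source center c is converted into a Taylor expansion about the target center b.) -/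
open Real

/-!
`hₙ` is the restriction to `ℝ` of the entire function `(-1)ⁿ (dⁿ/dzⁿ) exp(-z²)`, so its Taylor
series about any real point converges on all of `ℝ`. Since `hₙ⁽ᵐ⁾ = (-1)ᵐ hₙ₊ₘ`, this Taylor
expansion about `(b - c)/√α` reads `hₙ(t + u) = ∑ₘ (-1)ᵐ/m! · hₙ₊ₘ(t) · uᵐ`; the M2L formula is
its finite linear combination with coefficients `Aₙ`.
-/

open Nat

theorem iteratedDeriv_iteratedDeriv {𝕜 F : Type*} [NontriviallyNormedField 𝕜]
    [NormedAddCommGroup F] [NormedSpace 𝕜 F] (m n : ℕ) (f : 𝕜 → F) :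
    iteratedDeriv m (iteratedDeriv n f) = iteratedDeriv (n + m) f := by
  simp only [iteratedDeriv_eq_iterate, add_comm n m, Function.iterate_add_apply]

theorem Differentiable.iteratedDeriv_complex {E : Type*} [NormedAddCommGroup E]
    [NormedSpace ℂ E] [CompleteSpace E] {f : ℂ → E} (hf : Differentiable ℂ f) (n : ℕ) :
    Differentiable ℂ (iteratedDeriv n f) :=
  hf.contDiff.differentiable_iteratedDeriv n (WithTop.coe_lt_top _)

section RealRestriction

variable {f : ℂ → ℂ} {g : ℝ → ℝ}

theorem deriv_ofReal_of_entire (hf : Differentiable ℂ f) (hfg : ∀ x : ℝ, f x = g x) (x : ℝ) :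
    deriv f x = deriv g x := by
  have hf' : HasDerivAt f (deriv f x) x := (hf x).hasDerivAt
  have hg : HasDerivAt g (deriv f x).re x := by
    simpa only [hfg, Complex.ofReal_re] using hf'.real_of_complex
  have hg_ofReal : HasDerivAt (fun y : ℝ => (g y : ℂ)) (deriv f x) x := by
    simpa only [hfg] using hf'.comp_ofReal
  rw [hg.deriv]
  exact hg_ofReal.unique hg.ofReal_comp

theorem iteratedDeriv_ofReal_of_entire (hf : Differentiable ℂ f) (hfg : ∀ x : ℝ, f x = g x)
    (n : ℕ) (x : ℝ) : iteratedDeriv n f x = iteratedDeriv n g x := by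
  induction n generalizing x with
  | zero => simpa using hfg x
  | succ n ih =>
    simp only [iteratedDeriv_succ]
    exact deriv_ofReal_of_entire (hf.iteratedDeriv_complex n) ih x

theorem hasSum_taylorSeries_ofReal_of_entire (hf : Differentiable ℂ f)
    (hfg : ∀ x : ℝ, f x = g x) (x y : ℝ) :
    HasSum (fun n : ℕ => (n ! : ℝ)⁻¹ * iteratedDeriv n g x * (y - x) ^ n) (g y) := by
  have h := Complex.hasSum_taylorSeries_of_entire hf x y
  simp only [iteratedDeriv_ofReal_of_entire hf hfg, hfg, smul_eq_mul] at h
  rw [← Complex.hasSum_ofReal]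
  push_cast
  exact h.congr_fun fun n => by ring

end RealRestriction

theorem exists_entire_ofReal_eq_hermiteFun (n : ℕ) :
    ∃ f : ℂ → ℂ, Differentiable ℂ f ∧ ∀ x : ℝ, f x = hermiteFun n x := by
  have hG : Differentiable ℂ fun z : ℂ => Complex.exp (-z ^ 2) := by fun_prop
  have hGG : ∀ x : ℝ, Complex.exp (-(x : ℂ) ^ 2) = Real.exp (-x ^ 2) := fun x => by
    push_cast; rfl
  refine ⟨fun z => (-1) ^ n * iteratedDeriv n (fun z : ℂ => Complex.exp (-z ^ 2)) z,
    (hG.iteratedDeriv_complex n).const_mul _, fun x => ?_⟩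
  simp only [hermiteFun, iteratedDeriv_ofReal_of_entire hG hGG]
  push_cast; rfl

theorem iteratedDeriv_hermiteFun (m n : ℕ) :
    iteratedDeriv m (hermiteFun n) = fun t => (-1) ^ m * hermiteFun (n + m) t := by
  funext t
  have hsq : ((-1 : ℝ) ^ m) * (-1) ^ m = 1 := by rw [← mul_pow]; norm_num
  unfold hermiteFun
  rw [iteratedDeriv_const_mul_field, iteratedDeriv_iteratedDeriv, pow_add]
  linear_combination -(-1) ^ n * iteratedDeriv (n + m) (fun s : ℝ => Real.exp (-s ^ 2)) t * hsq

theorem hasSum_hermiteFun_add (n : ℕ) (t u : ℝ) :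
    HasSum (fun m : ℕ => ((-1) ^ m / m !) * hermiteFun (n + m) t * u ^ m)
      (hermiteFun n (t + u)) := by
  obtain ⟨f, hf, hfh⟩ := exists_entire_ofReal_eq_hermiteFun n
  convert hasSum_taylorSeries_ofReal_of_entire hf hfh t (t + u) using 2
  rw [iteratedDeriv_hermiteFun, add_sub_cancel_left]
  ring

theorem fgt_m2l_general (α : ℝ) (c b : ℝ) (A : ℕ →₀ ℝ) (E : ℕ → ℝ)
    (hE : ∀ m, E m = ((-1) ^ m / (m.factorial : ℝ)) *
        ∑ n ∈ A.support, A n * hermiteFun (n + m) ((b - c) / Real.sqrt α)) :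
    ∀ x : ℝ,
      HasSum (fun m : ℕ => E m * ((x - b) / Real.sqrt α) ^ m)
        (∑ n ∈ A.support, A n * hermiteFun n ((x - c) / Real.sqrt α)) := by
  intro x
  have hsplit : (x - c) / √α = (b - c) / √α + (x - b) / √α := by ring
  rw [hsplit]
  refine (hasSum_sum fun n _ => (hasSum_hermiteFun_add n _ _).mul_left (A n)).congr_fun
    fun m => ?_
  rw [hE m, Finset.mul_sum, Finset.sum_mul]
  exact Finset.sum_congr rfl fun n _ => by ring

/-- **M2L step of the Fast Gauss Transform.**
Given finitely supported coefficients `A : ℕ →₀ ℝ` and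
`E_m := ((−1)^m/m!)·Σ_n A_n·h_{n+m}((b−c)/√α)` (a finite sum), for every `x` the
series with `m`-th term `E_m·((x−b)/√α)^m` converges with sum
`Σ_n A_n·h_n((x−c)/√α)`. -/
theorem fgt_m2l (α : ℝ) (hα : 0 < α) (c b : ℝ) (A : ℕ →₀ ℝ) (E : ℕ → ℝ)
    (hE : ∀ m, E m = ((-1) ^ m / (m.factorial : ℝ)) *
        ∑ n ∈ A.support, A n * hermiteFun (n + m) ((b - c) / Real.sqrt α)) :
    ∀ x : ℝ,
      HasSum (fun m : ℕ => E m * ((x - b) / Real.sqrt α) ^ m)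
        (∑ n ∈ A.support, A n * hermiteFun n ((x - c) / Real.sqrt α)) :=
  fgt_m2l_general α c b A E hE
end
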